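/- Let 0 < s < 1. There is a constant C = C(s) such that for all N ≥ 1 the following holds. If ξ₁, ξ₂, ξ₃, ξ₄, ξ₅ ∈ ℝ satisfy |ξ₁| ≥ N, |ξ_j| ≤ N for j = 2,3,4,5, and |ξ₂| + |ξ₃| + |ξ₄| + |ξ₅| ≤ |ξ₁|/2, then |1 − m_N(ξ₁ + ξ₂ + ξ₃ + ξ₄ + ξ₅) / (m_N(ξ₁) m_N(ξ₂) m_N(ξ₃) m_N(ξ₄) m_N(ξ₅))| ≤ C (|ξ₂| + |ξ₃| + |ξ₄| + |ξ₅|) / |ξ₁|. -/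

import Mathlib

open MeasureTheory Real Set
open scoped ENNReal NNReal

noncomputable section

/-- `f : ℝ → ℂ` is a Schwartz function. -/
def IsSchwartz (f : ℝ → ℂ) : Prop := ∃ g : SchwartzMap ℝ ℂ, ∀ x, f x = g x

/-- The Fourier transform `𝓕 f (ξ) = ∫ e^{-2πi x ξ} f x dx`. -/
def FT (f : ℝ → ℂ) : ℝ → ℂ := FourierTransform.fourier f

/-- The inverse Fourier transform. -/
def FTinv (f : ℝ → ℂ) : ℝ → ℂ := FourierTransformInv.fourierInv f

/-- The `H^s` Sobolev norm. -/
def HNorm (s : ℝ) (f : ℝ → ℂ) : ℝ :=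
  (∫ ξ : ℝ, (1 + ξ ^ 2) ^ s * ‖FT f ξ‖ ^ 2) ^ (1/2 : ℝ)

/-- The mixed norm `‖u‖_{L^p_t L^q_x (J × ℝ)}`. -/
def mixedNorm (p q : ℝ≥0∞) (J : Set ℝ) (u : ℝ → ℝ → ℂ) : ℝ≥0∞ :=
  if p = ∞ then essSup (fun t => eLpNorm (u t) q volume) (volume.restrict J)
  else (∫⁻ t in J, (eLpNorm (u t) q volume) ^ p.toReal) ^ (1 / p.toReal)

/-- `(p,q)` is an admissible Strichartz pair: `2/p + 1/q = 1/2`, `4 ≤ p ≤ ∞`. -/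
def Admissible (p q : ℝ≥0∞) : Prop := 2 / p + 1 / q = 1 / 2 ∧ 4 ≤ p

/-- The Strichartz norm `S⁰(J × ℝ)`. -/
def SNorm (J : Set ℝ) (u : ℝ → ℝ → ℂ) : ℝ≥0∞ :=
  ⨆ (p : ℝ≥0∞) (q : ℝ≥0∞) (_ : Admissible p q), mixedNorm p q J u

/-- The I-method multiplier `m_N(ξ) = min(1, (N/|ξ|)^{1-s})`, `m_N(0) = 1`. -/
def mI (s N ξ : ℝ) : ℝ := if ξ = 0 then 1 else min 1 ((N / |ξ|) ^ (1 - s))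

/-- The I-operator `I_N f = 𝓕⁻¹ (m_N ⬝ 𝓕 f)`. -/
def Iop (s N : ℝ) (f : ℝ → ℂ) : ℝ → ℂ :=
  FTinv (fun ξ => (mI s N ξ : ℂ) * FT f ξ)

/-- The operator `⟨∇⟩ f = 𝓕⁻¹ ((1+ξ²)^{1/2} 𝓕 f)`. -/
def jb (f : ℝ → ℂ) : ℝ → ℂ :=
  FTinv (fun ξ => (((1 + ξ ^ 2) ^ (1/2 : ℝ) : ℝ) : ℂ) * FT f ξ)

/-- The Littlewood--Paley projection `P_{> M}`. -/
def Pgt (M : ℝ) (f : ℝ → ℂ) : ℝ → ℂ :=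
  FTinv (fun ξ => if M < |ξ| then FT f ξ else 0)

/-- The free Schrödinger propagator `e^{itΔ}`. -/
def schrodinger (t : ℝ) (f : ℝ → ℂ) : ℝ → ℂ :=
  FTinv (fun ξ => Complex.exp ((-(4 * π ^ 2 * t * ξ ^ 2) : ℝ) * Complex.I) * FT f ξ)

/-- `u` solves the quintic defocusing NLS `i ∂_t u + ∂_x² u = |u|⁴ u` pointwise on `S × ℝ`. -/
def SolvesNLS (u : ℝ → ℝ → ℂ) (S : Set ℝ) : Prop :=
  ∀ t ∈ S, ∀ x : ℝ,
    Complex.I * deriv (fun τ => u τ x) t + deriv (deriv (u t)) x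
      = (‖u t x‖ : ℂ) ^ 4 * u t x

/-- `u` is smooth on `ℝ × ℝ` and `u(t,·)` is Schwartz for every `t`. -/
def NiceSolution (u : ℝ → ℝ → ℂ) : Prop :=
  ContDiff ℝ (⊤ : ℕ∞) (Function.uncurry u) ∧ ∀ t, IsSchwartz (u t)

/-- The (modified) energy `E(f) = ½∫|∂_x f|² + ⅙∫|f|⁶`. -/
def energy (f : ℝ → ℂ) : ℝ :=
  (1/2) * (∫ x : ℝ, ‖deriv f x‖ ^ 2) + (1/6) * (∫ x : ℝ, ‖f x‖ ^ 6)

end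

/-!
Since `m_N(ξ) = (N / max(N, |ξ|))^{1-s}`, the small frequencies have `m_N = 1` and the quotient
is `ρ^{1-s}` with `ρ = max(N, |ξ₁|) / max(N, |ξ|)`, `ξ = ξ₁ + ⋯ + ξ₅`. As `0 ≤ 1 - s ≤ 1`,
`|1 - ρ^{1-s}| ≤ |1 - ρ|`, and `t ↦ max(N, |t|)` is `1`-Lipschitz, so
`|1 - ρ| ≤ |ξ₂ + ⋯ + ξ₅| / max(N, |ξ|)`, where `|ξ| ≥ |ξ₁| / 2`.
-/

lemma abs_one_sub_rpow_le_abs_one_sub {ρ a : ℝ} (hρ : 0 ≤ ρ) (ha0 : 0 ≤ a) (ha1 : a ≤ 1) :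
    |1 - ρ ^ a| ≤ |1 - ρ| := by
  rcases le_total ρ 1 with hle | hge
  · have h_le_one : ρ ^ a ≤ 1 := Real.rpow_le_one hρ hle ha0
    have h_ge : ρ ≤ ρ ^ a := by
      simpa using Real.rpow_le_rpow_of_exponent_ge' hρ hle ha0 ha1
    rw [abs_of_nonneg (by linarith), abs_of_nonneg (by linarith)]
    linarith
  · have h_one_le : 1 ≤ ρ ^ a := Real.one_le_rpow hge ha0
    have h_le : ρ ^ a ≤ ρ := by
      simpa using Real.rpow_le_rpow_of_exponent_le hge ha1
    rw [abs_of_nonpos (by linarith), abs_of_nonpos (by linarith)]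
    linarith

section Multiplier

variable {s N : ℝ}

lemma mI_eq_rpow_div_max (hN : 0 < N) (hs : s ≤ 1) (ξ : ℝ) :
    mI s N ξ = (N / max N |ξ|) ^ (1 - s) := by
  have ha : 0 ≤ 1 - s := by linarith
  unfold mI
  split_ifs with hξ
  · simp [hξ, hN.le, hN.ne']
  rcases le_total |ξ| N with hle | hlt
  · rw [max_eq_left hle, div_self hN.ne', Real.one_rpow]
    exact min_eq_left (Real.one_le_rpow ((one_le_div (abs_pos.2 hξ)).2 hle) ha)
  · rw [max_eq_right hlt]
    exact min_eq_right (Real.rpow_le_one (by positivity) ((div_le_one (hN.trans_le hlt)).2 hlt) ha)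

lemma mI_eq_one (hN : 0 < N) (hs : s ≤ 1) {ξ : ℝ} (hξ : |ξ| ≤ N) : mI s N ξ = 1 := by
  rw [mI_eq_rpow_div_max hN hs, max_eq_left hξ, div_self hN.ne', Real.one_rpow]

lemma mI_div_mI (hN : 0 < N) (hs : s ≤ 1) (ξ ξ' : ℝ) :
    mI s N ξ / mI s N ξ' = (max N |ξ'| / max N |ξ|) ^ (1 - s) := by
  have hM : 0 < max N |ξ| := lt_max_of_lt_left hN
  have hM' : 0 < max N |ξ'| := lt_max_of_lt_left hN
  rw [mI_eq_rpow_div_max hN hs, mI_eq_rpow_div_max hN hs,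
    ← Real.div_rpow (by positivity) (by positivity)]
  congr 1
  field_simp

lemma abs_one_sub_mI_div_mI_le (hN : 0 < N) (hs0 : 0 ≤ s) (hs1 : s ≤ 1) (ξ ξ' : ℝ) :
    |1 - mI s N ξ / mI s N ξ'| ≤ |ξ - ξ'| / max N |ξ| := by
  have hM : 0 < max N |ξ| := lt_max_of_lt_left hN
  have h_lipschitz : abs (max N |ξ| - max N |ξ'|) ≤ |ξ - ξ'| := by
    rw [max_comm N, max_comm N]
    exact (abs_max_sub_max_le_abs _ _ _).trans (abs_abs_sub_abs_le_abs_sub _ _)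
  calc |1 - mI s N ξ / mI s N ξ'|
      = |1 - (max N |ξ'| / max N |ξ|) ^ (1 - s)| := by rw [mI_div_mI hN hs1]
    _ ≤ abs (1 - max N |ξ'| / max N |ξ|) :=
        abs_one_sub_rpow_le_abs_one_sub (by positivity) (by linarith) (by linarith)
    _ = abs (max N |ξ| - max N |ξ'|) / max N |ξ| := by
        rw [one_sub_div hM.ne', abs_div, abs_of_pos hM]
    _ ≤ |ξ - ξ'| / max N |ξ| := by gcongr

end Multiplier

/-- commutator bound for the multiplier `m_N` when one frequency
    dominates. -/
theorem multiplier_mean_value_bound (s : ℝ) (hs0 : 0 < s) (hs1 : s < 1) :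
    ∃ C : ℝ, 0 < C ∧
      ∀ (N : ℝ), 1 ≤ N →
      ∀ ξ₁ ξ₂ ξ₃ ξ₄ ξ₅ : ℝ,
        N ≤ |ξ₁| → |ξ₂| ≤ N → |ξ₃| ≤ N → |ξ₄| ≤ N → |ξ₅| ≤ N →
        |ξ₂| + |ξ₃| + |ξ₄| + |ξ₅| ≤ |ξ₁| / 2 →
        |1 - mI s N (ξ₁ + ξ₂ + ξ₃ + ξ₄ + ξ₅) /
            (mI s N ξ₁ * mI s N ξ₂ * mI s N ξ₃ * mI s N ξ₄ * mI s N ξ₅)|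
          ≤ C * (|ξ₂| + |ξ₃| + |ξ₄| + |ξ₅|) / |ξ₁| := by
  refine ⟨2, two_pos, fun N hN ξ₁ ξ₂ ξ₃ ξ₄ ξ₅ h₁ h₂ h₃ h₄ h₅ hsmall => ?_⟩
  have hN0 : 0 < N := one_pos.trans_le hN
  set D := |ξ₂| + |ξ₃| + |ξ₄| + |ξ₅|
  have h_shift : |ξ₁ + ξ₂ + ξ₃ + ξ₄ + ξ₅ - ξ₁| ≤ D := by
    rw [show ξ₁ + ξ₂ + ξ₃ + ξ₄ + ξ₅ - ξ₁ = ξ₂ + ξ₃ + ξ₄ + ξ₅ by ring]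
    exact (abs_add_le _ _).trans (add_le_add_left
      ((abs_add_le _ _).trans (add_le_add_left (abs_add_le _ _) _)) _)
  have h_sum_large : |ξ₁| / 2 ≤ max N |ξ₁ + ξ₂ + ξ₃ + ξ₄ + ξ₅| := by
    have := abs_sub_abs_le_abs_sub ξ₁ (ξ₁ + ξ₂ + ξ₃ + ξ₄ + ξ₅)
    rw [abs_sub_comm] at this
    exact le_max_of_le_right (by linarith)
  rw [mI_eq_one hN0 hs1.le h₂, mI_eq_one hN0 hs1.le h₃, mI_eq_one hN0 hs1.le h₄,
    mI_eq_one hN0 hs1.le h₅, mul_one, mul_one, mul_one, mul_one]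
  calc _ ≤ |ξ₁ + ξ₂ + ξ₃ + ξ₄ + ξ₅ - ξ₁| / max N |ξ₁ + ξ₂ + ξ₃ + ξ₄ + ξ₅| :=
        abs_one_sub_mI_div_mI_le hN0 hs0.le hs1.le _ _
    _ ≤ D / (|ξ₁| / 2) := by gcongr; linarith
    _ = 2 * D / |ξ₁| := by ring
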